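/- Let q ≥ 1, m ≥ 3, Σ = {x_1, …, x_q}, and let S = ⋃_{i=1}^q {x_i^m, x_i^{m+1}} ∪ ⋃_{i ≠ j} {x_i x_j^{m−1}, x_j^{m−1} x_i}. If every word over Σ of length (q−1)m² − 2qm + 3m is in S^†, then every word over Σ of length at least qm² − 2qm + 2m is in S^†. -/

import Mathlib

/-- `Shuffle u v w` means that the word `w` is an interleaving (shuffle) of the
words `u` and `v`. -/
inductive Shuffle {α : Type*} : List α → List α → List α → Prop
  | nil : Shuffle [] [] []
  | left {a : α} {u v w : List α} : Shuffle u v w → Shuffle (a :: u) v (a :: w)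
  | right {a : α} {u v w : List α} : Shuffle u v w → Shuffle u (a :: v) (a :: w)

/-- `IterShuffle S y` means `y` belongs to the iterated shuffle `S^†`, i.e. `y`
can be obtained by shuffling together finitely many (possibly zero) words of `S`. -/
inductive IterShuffle {α : Type*} (S : Set (List α)) : List α → Prop
  | nil : IterShuffle S []
  | step {u w y : List α} : u ∈ S → IterShuffle S w → Shuffle u w y → IterShuffle S y

/-!
By pigeonhole, a word of length greater than `q (k - 1)` contains some letter `x` at least `k`
times, so it is a shuffle of `x^k` with a word shorter by `k`. Peeling off factors `x^m` and
`x^(m+1)`, both in `S`, reduces a word to one of length `n = (q - 1)m² - 2qm + 3m`, which lies in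
`S^†` by hypothesis, as soon as the excess length is a sum of `m`'s and `(m + 1)`'s. That holds
for every excess `≥ m(m - 1)`, since the Frobenius number of `{m, m + 1}` is `m² - m - 1`; and
`n + m(m - 1)` is the bound `qm² - 2qm + 2m` of the theorem.
-/

variable {α : Type*}

namespace Shuffle

theorem length_eq {u v w : List α} (h : Shuffle u v w) : w.length = u.length + v.length := by
  induction h with
  | nil => rfl
  | left _ ih => simp only [List.length_cons, ih]; omega
  | right _ ih => simp only [List.length_cons, ih]; omega

theorem nil_left : ∀ v : List α, Shuffle [] v v
  | [] => nil
  | _ :: v => right (nil_left v)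

theorem exists_replicate_of_le_count [DecidableEq α] (a : α) {k : ℕ} {w : List α}
    (h : k ≤ w.count a) : ∃ v, Shuffle (List.replicate k a) v w := by
  induction w generalizing k with
  | nil =>
    obtain rfl : k = 0 := by simpa using h
    exact ⟨[], nil⟩
  | cons b w ih =>
    rcases k with _ | k
    · exact ⟨b :: w, nil_left _⟩
    by_cases hba : b = a
    · subst hba
      obtain ⟨v, hv⟩ := ih (k := k) (by simpa using h)
      exact ⟨v, hv.left⟩
    · obtain ⟨v, hv⟩ := ih (k := k + 1) (by simpa [List.count_cons, hba] using h)
      exact ⟨b :: v, hv.right⟩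

end Shuffle

theorem exists_lt_count_of_card_mul_lt_length [Fintype α] [DecidableEq α] {k : ℕ} {w : List α}
    (h : Fintype.card α * k < w.length) : ∃ a, k < w.count a := by
  have hsum : ∑ a, w.count a = w.length := by
    simpa using Multiset.sum_count_eq_card (m := (w : Multiset α)) fun a _ => Finset.mem_univ a
  obtain ⟨a, -, ha⟩ := Finset.exists_lt_of_sum_lt (f := fun _ => k) (g := (w.count ·))
    (s := Finset.univ) (by simpa [hsum, mul_comm] using h)
  exact ⟨a, ha⟩

theorem exists_mul_add_mul_succ_eq {m r : ℕ} (hm : 1 < m) (hr : m * (m - 1) ≤ r) :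
    ∃ a b, a * m + b * (m + 1) = r := by
  have hfrob := frobeniusNumber_iff.1 <|
    frobeniusNumber_pair (Nat.coprime_self_add_right.2 (Nat.coprime_one_right m)) hm (by omega)
  have hr' : m * (m + 1) - m - (m + 1) < r := by
    have hmm : m * 1 < m * m := Nat.mul_lt_mul_of_pos_left hm (by omega)
    rw [Nat.mul_sub_one] at hr
    rw [Nat.mul_add_one]
    omega
  simpa [AddSubmonoid.mem_closure_pair] using hfrob.2 r hr'

section
variable [Fintype α] {S : Set (List α)} {k n : ℕ}

theorem iterShuffle_of_length_add (hrep : ∀ a, List.replicate k a ∈ S)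
    (hcard : Fintype.card α * (k - 1) < n + k) (h : ∀ w : List α, w.length = n → IterShuffle S w)
    (w : List α) (hw : w.length = n + k) : IterShuffle S w := by
  classical
  obtain ⟨a, ha⟩ := exists_lt_count_of_card_mul_lt_length (hw ▸ hcard)
  obtain ⟨v, hv⟩ := Shuffle.exists_replicate_of_le_count a (k := k) (w := w) (by omega)
  have hlen := hv.length_eq
  rw [List.length_replicate] at hlen
  exact .step (hrep a) (h v (by omega)) hv

theorem iterShuffle_of_length_add_mul (hrep : ∀ a, List.replicate k a ∈ S)
    (hcard : Fintype.card α * (k - 1) < n + k) (h : ∀ w : List α, w.length = n → IterShuffle S w)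
    (c : ℕ) (w : List α) (hw : w.length = n + c * k) : IterShuffle S w := by
  induction c generalizing w with
  | zero => exact h w (by simpa using hw)
  | succ c ih =>
    refine iterShuffle_of_length_add hrep (by omega) ih w ?_
    rw [hw, Nat.succ_mul, Nat.add_assoc]

theorem iterShuffle_of_length_ge {m : ℕ} (hm : 1 < m) (hrep : ∀ a, List.replicate m a ∈ S)
    (hrep_succ : ∀ a, List.replicate (m + 1) a ∈ S) (hcard : Fintype.card α * m ≤ n + m)
    (h : ∀ w : List α, w.length = n → IterShuffle S w)
    (w : List α) (hw : n + m * (m - 1) ≤ w.length) : IterShuffle S w := by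
  obtain ⟨a, b, hab⟩ := exists_mul_add_mul_succ_eq hm (Nat.le_sub_of_add_le' hw)
  have hb := iterShuffle_of_length_add_mul hrep_succ (by rw [Nat.add_sub_cancel]; omega) h b
  refine iterShuffle_of_length_add_mul hrep ?_ hb a w (by omega)
  rcases (Fintype.card α).eq_zero_or_pos with h0 | hpos
  · rw [h0, zero_mul]
    omega
  · calc Fintype.card α * (m - 1) < Fintype.card α * m := (Nat.mul_lt_mul_left hpos).2 (by omega)
      _ ≤ n + b * (m + 1) + m := by omega

end

/-- For `q ≥ 1`, `m ≥ 3` and the prototypical set `S`: if every word of length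
`(q-1)m² - 2qm + 3m` is in `S^†`, then every word of length at least
`qm² - 2qm + 2m` is in `S^†`. -/
theorem iterShuffle_of_all_short (q m : ℕ) (hq : 1 ≤ q) (hm : 3 ≤ m)
    (S : Set (List (Fin q)))
    (hS : S = {w | ∃ i : Fin q, w = List.replicate m i ∨ w = List.replicate (m + 1) i} ∪
              {w | ∃ i j : Fin q, i ≠ j ∧
                (w = i :: List.replicate (m - 1) j ∨
                 w = List.replicate (m - 1) j ++ [i])})
    (hshort : ∀ z : List (Fin q),
      (z.length : ℤ) = ((q : ℤ) - 1) * m ^ 2 - 2 * q * m + 3 * m → IterShuffle S z) :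
    ∀ y : List (Fin q),
      (q : ℤ) * m ^ 2 - 2 * q * m + 2 * m ≤ (y.length : ℤ) → IterShuffle S y := by
  set n := (q - 1) * m * (m - 2) + m
  have hn : (n : ℤ) = ((q : ℤ) - 1) * m ^ 2 - 2 * q * m + 3 * m := by
    push_cast [n, Nat.cast_sub hq, Nat.cast_sub (by omega : 2 ≤ m)]
    ring
  have hrep (i : Fin q) : List.replicate m i ∈ S ∧ List.replicate (m + 1) i ∈ S := by
    rw [hS]
    exact ⟨.inl ⟨i, .inl rfl⟩, .inl ⟨i, .inr rfl⟩⟩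
  intro y hy
  refine iterShuffle_of_length_ge (by omega) (fun i => (hrep i).1) (fun i => (hrep i).2) ?_
    (fun z hz => hshort z (hz ▸ hn)) y ?_
  · have hqm : (q : ℤ) * m ≤ n + m := by
      have hq' : (0 : ℤ) ≤ q - 1 := by omega
      have hm' : (0 : ℤ) ≤ m * (m - 3) := by nlinarith
      nlinarith [mul_nonneg hq' hm']
    rw [Fintype.card_fin]
    exact_mod_cast hqm
  · zify [(by omega : 1 ≤ m)]
    linarith
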